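/- Let κ ≥ 0, α_x, α_t ∈ (0,1], p ∈ C^{α_x,α_t}([0,T]×Ω̄) with 1 < p⁻ ≤ p⁺ < ∞, and let s > 1. Then there exist c > 0 and h₀ ∈ (0,1) such that for all t ∈ [0,T], all x, y ∈ Ω̄ with |x − y| ≤ h₀, and all ξ ∈ ℝ^{N×n}: |S(t,y,ξ) − S(t,x,ξ)| ≤ c |x − y|^{α_x} (κ + |ξ|)^{(p(t,x)−1)/2} (1 + |ξ|)^{(s·p(t,x)−1)/2}. -/

import Mathlib

/-!
With `a = κ + |ξ|` and `δ = p(t,y) − p(t,x)`, the difference is `(a^δ − 1) a^{p(t,x)−2} ξ`, and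
`|a^δ − 1| ≤ |δ| |log a| exp(|δ| |log a|)`. Hölder continuity in `x` gives `|δ| ≤ c₀ |x − y|^{α_x} ≤ ε`
once `|x − y| ≤ h₀`, and `|log a| ≤ exp(ε |log a|) / ε`, so only a factor `max(a^{2ε}, a^{−2ε})` is
lost. For `a ≤ 1` it is absorbed by the slack `(p⁻ − 1)/2` in the exponent of `κ + |ξ|`, for
`a ≥ 1` by the slack `(s − 1) p⁻ / 2` in the exponent of `1 + |ξ|`, using `κ + |ξ| ≤ (1 + κ)(1 + |ξ|)`.
-/

open Set Real

theorem abs_exp_sub_one_le_abs_mul_exp_abs (x : ℝ) : |exp x - 1| ≤ |x| * exp |x| := by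
  rcases le_total 0 x with hx | hx
  · have h1 : exp x * exp (-x) = 1 := by rw [← exp_add, add_neg_cancel, exp_zero]
    rw [abs_of_nonneg hx, abs_of_nonneg (by linarith [one_le_exp hx])]
    nlinarith [add_one_le_exp (-x), exp_pos x]
  · rw [abs_of_nonpos hx, abs_of_nonpos (by linarith [exp_le_one_iff.2 hx])]
    nlinarith [add_one_le_exp x, one_le_exp (neg_nonneg.2 hx)]

theorem abs_rpow_sub_rpow_le {a : ℝ} (ha : 0 < a) (q r : ℝ) :
    |a ^ r - a ^ q| ≤ |r - q| * |log a| * exp (|r - q| * |log a|) * a ^ q := by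
  have hfactor : a ^ r - a ^ q = (exp ((r - q) * log a) - 1) * a ^ q := by
    rw [sub_one_mul, mul_comm (r - q), ← rpow_def_of_pos ha, ← rpow_add ha, sub_add_cancel]
  rw [hfactor, abs_mul, abs_of_pos (rpow_pos_of_pos ha q), ← abs_mul]
  gcongr
  exact abs_exp_sub_one_le_abs_mul_exp_abs _

theorem abs_le_exp_mul_abs_div {ε : ℝ} (hε : 0 < ε) (u : ℝ) : |u| ≤ exp (ε * |u|) / ε := by
  rw [le_div_iff₀ hε]
  linarith [add_one_le_exp (ε * |u|)]

theorem rpow_mul_exp_mul_abs_log_le {a e η : ℝ} (ha : 0 < a) (hηe : η ≤ e) :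
    a ^ e * exp (η * |log a|) ≤ max 1 a ^ (e + η) := by
  rcases le_total a 1 with ha1 | ha1
  · rw [max_eq_left ha1, one_rpow, abs_of_nonpos (log_nonpos ha.le ha1), ← neg_mul_comm,
      mul_comm (-η), ← rpow_def_of_pos ha, ← rpow_add ha]
    exact rpow_le_one ha.le ha1 (by linarith)
  · rw [max_eq_right ha1, abs_of_nonneg (log_nonneg ha1), mul_comm η, ← rpow_def_of_pos ha,
      ← rpow_add ha]

theorem max_one_add_rpow_le {κ r e K f : ℝ} (hκ : 0 ≤ κ) (hr : 0 ≤ r) (he : 0 ≤ e)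
    (heK : e ≤ K) (hef : e ≤ f) : max 1 (κ + r) ^ e ≤ (1 + κ) ^ K * (1 + r) ^ f := by
  have hle : max 1 (κ + r) ≤ (1 + κ) * (1 + r) := max_le (by nlinarith) (by nlinarith)
  calc max 1 (κ + r) ^ e ≤ ((1 + κ) * (1 + r)) ^ e := by gcongr
    _ = (1 + κ) ^ e * (1 + r) ^ e := mul_rpow (by linarith) (by linarith)
    _ ≤ (1 + κ) ^ K * (1 + r) ^ f := by gcongr <;> linarith

theorem exists_pos_lt_one_mul_rpow_le (c : ℝ) {α ε : ℝ} (hα : 0 < α) (hε : 0 < ε) :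
    ∃ h₀, 0 < h₀ ∧ h₀ < 1 ∧ c * h₀ ^ α ≤ ε := by
  have hcont : ContinuousAt (fun h : ℝ => c * h ^ α) 0 :=
    continuousAt_const.mul (continuousAt_rpow_const 0 α (Or.inr hα.le))
  have hsmall : ∀ᶠ h in nhdsWithin (0 : ℝ) (Ioi 0), c * h ^ α < ε := by
    refine nhdsWithin_le_nhds (hcont.eventually (gt_mem_nhds ?_))
    simpa [zero_rpow hα.ne'] using hε
  obtain ⟨h₀, hsmall, hpos, hlt⟩ := (hsmall.and (Ioo_mem_nhdsGT one_pos)).exists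
  exact ⟨h₀, hpos, hlt, hsmall.le⟩

theorem norm_rpow_smul_sub_rpow_smul_le {E : Type*} [NormedAddCommGroup E] [NormedSpace ℝ E]
    {κ ε q r : ℝ} (hκ : 0 ≤ κ) (hε : 0 < ε) (hrq : |r - q| ≤ ε) (hq : 4 * ε ≤ q - 1) (ξ : E) :
    ‖(κ + ‖ξ‖) ^ (r - 2) • ξ - (κ + ‖ξ‖) ^ (q - 2) • ξ‖ ≤
      |r - q| / ε * (κ + ‖ξ‖) ^ ((q - 1) / 2) * max 1 (κ + ‖ξ‖) ^ ((q - 1) / 2 + 2 * ε) := by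
  rcases eq_or_ne ξ 0 with rfl | hξ
  · simp only [smul_zero, sub_zero, norm_zero, add_zero]
    positivity
  set a := κ + ‖ξ‖
  have ha : 0 < a := add_pos_of_nonneg_of_pos hκ (norm_pos_iff.2 hξ)
  set L := |log a|
  set δ := |r - q|
  have hδ : |(r - 2) - (q - 2)| = δ := by rw [sub_sub_sub_cancel_right]
  have hsplit : a ^ (q - 2) * a = a ^ ((q - 1) / 2) * a ^ ((q - 1) / 2) := by
    rw [← rpow_add_one ha.ne', ← rpow_add ha]; ring_nf
  have hexp : exp (ε * L) * exp (ε * L) = exp (2 * ε * L) := by rw [← exp_add]; ring_nf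
  calc ‖a ^ (r - 2) • ξ - a ^ (q - 2) • ξ‖ = |a ^ (r - 2) - a ^ (q - 2)| * ‖ξ‖ := by
        rw [← sub_smul, norm_smul, norm_eq_abs]
    _ ≤ δ * L * exp (δ * L) * a ^ (q - 2) * a := by
        gcongr
        · simpa only [hδ] using abs_rpow_sub_rpow_le ha (q - 2) (r - 2)
        · exact le_add_of_nonneg_left hκ
    _ ≤ δ * (exp (ε * L) / ε) * exp (ε * L) * a ^ (q - 2) * a := by
        gcongr
        exact abs_le_exp_mul_abs_div hε _
    _ = δ / ε * a ^ ((q - 1) / 2) * (a ^ ((q - 1) / 2) * exp (2 * ε * L)) := by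
        rw [← hexp, mul_assoc _ (a ^ (q - 2)), hsplit]; ring
    _ ≤ δ / ε * a ^ ((q - 1) / 2) * max 1 a ^ ((q - 1) / 2 + 2 * ε) := by
        gcongr
        exact rpow_mul_exp_mul_abs_log_le ha (by linarith)

theorem stmt9_general (N n : ℕ) (T : ℝ)
    (Ω : Set (EuclideanSpace ℝ (Fin n)))
    (κ αx αt : ℝ) (hκ : 0 ≤ κ) (hαx : αx ∈ Ioc (0:ℝ) 1) (hαt : αt ∈ Ioc (0:ℝ) 1)
    (p : ℝ × EuclideanSpace ℝ (Fin n) → ℝ) (pminus pplus c₀ : ℝ)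
    (hpm : 1 < pminus) (hc₀ : 0 ≤ c₀)
    (hbounds : ∀ z ∈ Icc (0:ℝ) T ×ˢ closure Ω, pminus ≤ p z ∧ p z ≤ pplus)
    (hHolder : ∀ t ∈ Icc (0:ℝ) T, ∀ s ∈ Icc (0:ℝ) T, ∀ x ∈ closure Ω, ∀ y ∈ closure Ω,
      |p (t, x) - p (s, y)| ≤ c₀ * (|t - s| ^ αt + ‖x - y‖ ^ αx))
    (s : ℝ) (hs : 1 < s) :
    ∃ c h₀ : ℝ, 0 < c ∧ 0 < h₀ ∧ h₀ < 1 ∧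
      ∀ t ∈ Icc (0:ℝ) T, ∀ x ∈ closure Ω, ∀ y ∈ closure Ω, ‖x - y‖ ≤ h₀ →
        ∀ ξ : EuclideanSpace ℝ (Fin N × Fin n),
          ‖(κ + ‖ξ‖) ^ (p (t, y) - 2) • ξ - (κ + ‖ξ‖) ^ (p (t, x) - 2) • ξ‖ ≤
            c * ‖x - y‖ ^ αx * (κ + ‖ξ‖) ^ ((p (t, x) - 1) / 2) *
              (1 + ‖ξ‖) ^ ((s * p (t, x) - 1) / 2) := by
  obtain ⟨ε, hε, hεp, hεs⟩ : ∃ ε > 0, 4 * ε ≤ pminus - 1 ∧ 4 * ε ≤ (s - 1) * pminus :=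
    ⟨min (pminus - 1) ((s - 1) * pminus) / 4, by positivity, by grind, by grind⟩
  obtain ⟨h₀, hh₀, hh₀1, hh₀ε⟩ := exists_pos_lt_one_mul_rpow_le c₀ hαx.1 hε
  set K := (pplus - 1) / 2 + 2 * ε with hK
  refine ⟨(c₀ + 1) * (1 + κ) ^ K / ε, h₀, by positivity, hh₀, hh₀1, ?_⟩
  intro t ht x hx y hy hxy ξ
  obtain ⟨hpx, hpx'⟩ := hbounds (t, x) ⟨ht, hx⟩
  have hHolder_x : |p (t, y) - p (t, x)| ≤ c₀ * ‖x - y‖ ^ αx := by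
    simpa [zero_rpow hαt.1.ne', norm_sub_rev] using hHolder t ht t ht y hy x hx
  have hsmall : |p (t, y) - p (t, x)| ≤ ε :=
    hHolder_x.trans (le_trans (by gcongr; exact hαx.1.le) hh₀ε)
  calc _ ≤ |p (t, y) - p (t, x)| / ε * (κ + ‖ξ‖) ^ ((p (t, x) - 1) / 2) *
        max 1 (κ + ‖ξ‖) ^ ((p (t, x) - 1) / 2 + 2 * ε) :=
        norm_rpow_smul_sub_rpow_smul_le hκ hε hsmall (by linarith) ξ
    _ ≤ c₀ * ‖x - y‖ ^ αx / ε * (κ + ‖ξ‖) ^ ((p (t, x) - 1) / 2) *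
        ((1 + κ) ^ K * (1 + ‖ξ‖) ^ ((s * p (t, x) - 1) / 2)) := by
        gcongr
        exact max_one_add_rpow_le hκ (norm_nonneg ξ) (by linarith) (by linarith [hK])
          (by nlinarith)
    _ = c₀ * (1 + κ) ^ K / ε * ‖x - y‖ ^ αx * (κ + ‖ξ‖) ^ ((p (t, x) - 1) / 2) *
        (1 + ‖ξ‖) ^ ((s * p (t, x) - 1) / 2) := by ring
    _ ≤ _ := by gcongr; linarith

/-- (Estimate (hxS): space-difference of `S`.)
Let `κ ≥ 0`, `α_x, α_t ∈ (0,1]`, `p ∈ C^{α_x,α_t}([0,T]×Ω̄)` with `1 < p⁻ ≤ p⁺ < ∞`, and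
`s > 1`. Then there are `c > 0` and `h₀ ∈ (0,1)` such that for all `t ∈ [0,T]`, all
`x, y ∈ Ω̄` with `|x − y| ≤ h₀`, and all `ξ`:
`|S(t,y,ξ) − S(t,x,ξ)| ≤ c |x − y|^{α_x} (κ + |ξ|)^{(p(t,x)−1)/2} (1 + |ξ|)^{(s p(t,x)−1)/2}`. -/
theorem stmt9 (N n : ℕ) (T : ℝ) (hT : 0 < T)
    (Ω : Set (EuclideanSpace ℝ (Fin n))) (hΩopen : IsOpen Ω) (hΩbdd : Bornology.IsBounded Ω)
    (κ αx αt : ℝ) (hκ : 0 ≤ κ) (hαx : αx ∈ Ioc (0:ℝ) 1) (hαt : αt ∈ Ioc (0:ℝ) 1)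
    (p : ℝ × EuclideanSpace ℝ (Fin n) → ℝ) (pminus pplus c₀ : ℝ)
    (hpm : 1 < pminus) (hpp : pminus ≤ pplus) (hc₀ : 0 ≤ c₀)
    (hbounds : ∀ z ∈ Icc (0:ℝ) T ×ˢ closure Ω, pminus ≤ p z ∧ p z ≤ pplus)
    (hHolder : ∀ t ∈ Icc (0:ℝ) T, ∀ s ∈ Icc (0:ℝ) T, ∀ x ∈ closure Ω, ∀ y ∈ closure Ω,
      |p (t, x) - p (s, y)| ≤ c₀ * (|t - s| ^ αt + ‖x - y‖ ^ αx))
    (s : ℝ) (hs : 1 < s) :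
    ∃ c h₀ : ℝ, 0 < c ∧ 0 < h₀ ∧ h₀ < 1 ∧
      ∀ t ∈ Icc (0:ℝ) T, ∀ x ∈ closure Ω, ∀ y ∈ closure Ω, ‖x - y‖ ≤ h₀ →
        ∀ ξ : EuclideanSpace ℝ (Fin N × Fin n),
          ‖(κ + ‖ξ‖) ^ (p (t, y) - 2) • ξ - (κ + ‖ξ‖) ^ (p (t, x) - 2) • ξ‖ ≤
            c * ‖x - y‖ ^ αx * (κ + ‖ξ‖) ^ ((p (t, x) - 1) / 2) *
              (1 + ‖ξ‖) ^ ((s * p (t, x) - 1) / 2) :=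
  stmt9_general N n T Ω κ αx αt hκ hαx hαt p pminus pplus c₀ hpm hc₀ hbounds hHolder s hs
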